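/- arXiv:1602.05986 — 5 statements merged into one kernel-verified Lean document; each statement's English description precedes it below -/
import Mathlib

section
/- Let λ > 0, p ∈ [0,1], let N be Poisson distributed with rate λ, and conditionally on N = n let K be binomially distributed with parameters n and p (so the joint law is the bind of the Poisson(λ) PMF with the binomial kernel). Then K and N − K are independent, K is Poisson distributed with rate λp, and N − K is Poisson distributed with rate λ(1−p); that is, P(K = a, N − K = b) = exp(−λp)(λp)^a/a! · exp(−λ(1−p))(λ(1−p))^b/b! for all a, b ∈ ℕ. -/
/-!
Given `N = a + b`, the event `K = a` has probability `C(a+b, a) p^a (1-p)^b`, and multiplying by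
the Poisson weight of `a + b` splits `e^{-λ} = e^{-λp} e^{-λ(1-p)}` and `λ^{a+b}/(a+b)!` into a
product of a function of `a` and a function of `b`. A joint law of product form whose factors are
probability weights has these factors as marginals, and makes the two variables independent.
-/

open MeasureTheory ProbabilityTheory ENNReal

section DiscreteJointLaw

variable {Ω α β : Type*} [MeasurableSpace Ω] {μ : Measure Ω} [MeasurableSpace β]
  {X : Ω → α} {Y : Ω → β}

lemma measure_eq_tsum_inter_preimage_singleton [Countable β] [MeasurableSingletonClass β]
    (hY : Measurable Y) (s : Set Ω) : μ s = ∑' b, μ (s ∩ Y ⁻¹' {b}) := by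
  have hfiber (b : β) : MeasurableSet (Y ⁻¹' {b}) := hY (measurableSet_singleton b)
  calc μ s = μ.restrict s (⋃ b, Y ⁻¹' {b}) := by
        rw [← Set.preimage_iUnion, Set.iUnion_of_singleton, Set.preimage_univ,
          Measure.restrict_apply_univ]
    _ = ∑' b, μ.restrict s (Y ⁻¹' {b}) := measure_iUnion (pairwise_disjoint_fiber Y) hfiber
    _ = ∑' b, μ (s ∩ Y ⁻¹' {b}) := by
        simp only [Measure.restrict_apply (hfiber _), Set.inter_comm]

lemma measure_preimage_singleton_eq_of_joint_eq_mul [Countable β] [MeasurableSingletonClass β]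
    (hY : Measurable Y) {f : α → ℝ≥0∞} {g : β → ℝ≥0∞}
    (hjoint : ∀ a b, μ (X ⁻¹' {a} ∩ Y ⁻¹' {b}) = f a * g b) (hg : ∑' b, g b = 1) (a : α) :
    μ (X ⁻¹' {a}) = f a := by
  rw [measure_eq_tsum_inter_preimage_singleton hY, tsum_congr (hjoint a),
    ENNReal.tsum_mul_left, hg, mul_one]

lemma indepFun_of_measure_inter_preimage_singleton_eq_mul [IsFiniteMeasure μ]
    [MeasurableSpace α] [Countable α] [MeasurableSingletonClass α]
    [Countable β] [MeasurableSingletonClass β]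
    (hX : Measurable X) (hY : Measurable Y)
    (h : ∀ a b, μ (X ⁻¹' {a} ∩ Y ⁻¹' {b}) = μ (X ⁻¹' {a}) * μ (Y ⁻¹' {b})) :
    IndepFun X Y μ := by
  rw [indepFun_iff_map_prod_eq_prod_map_map hX.aemeasurable hY.aemeasurable]
  refine Measure.ext_of_singleton fun ⟨a, b⟩ => ?_
  rw [← Set.singleton_prod_singleton, Measure.prod_prod, Measure.map_apply (hX.prodMk hY)
    ((measurableSet_singleton a).prod (measurableSet_singleton b)), Set.mk_preimage_prod,
    Measure.map_apply hX (measurableSet_singleton a),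
    Measure.map_apply hY (measurableSet_singleton b)]
  exact h a b

end DiscreteJointLaw

lemma tsum_ofReal_poisson {r : ℝ} (hr : 0 ≤ r) :
    ∑' n : ℕ, ENNReal.ofReal (Real.exp (-r) * r ^ n / n.factorial) = 1 := by
  have hsum : HasSum (fun n : ℕ => Real.exp (-r) * r ^ n / n.factorial) 1 :=
    hasSum_one_poissonMeasure ⟨r, hr⟩
  rw [← ENNReal.ofReal_tsum_of_nonneg (fun n => by positivity) hsum.summable, hsum.tsum_eq,
    ENNReal.ofReal_one]

lemma poisson_mul_binomial_eq_poisson_mul_poisson (lam p : ℝ) (a b : ℕ) :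
    Real.exp (-lam) * lam ^ (a + b) / (a + b).factorial *
        ((a + b).choose a * p ^ a * (1 - p) ^ b) =
      Real.exp (-(lam * p)) * (lam * p) ^ a / a.factorial *
        (Real.exp (-(lam * (1 - p))) * (lam * (1 - p)) ^ b / b.factorial) := by
  have hexp : Real.exp (-lam) = Real.exp (-(lam * p)) * Real.exp (-(lam * (1 - p))) := by
    rw [← Real.exp_add]; congr 1; ring
  have hchoose : ((a + b).choose a : ℝ) = (a + b).factorial / (a.factorial * b.factorial) := by
    simpa using Nat.cast_choose ℝ (Nat.le_add_right a b)
  rw [hexp, hchoose, mul_pow, mul_pow, pow_add]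
  field_simp

lemma setOf_eq_inter_setOf_sub_eq {Ω : Type*} {N K : Ω → ℕ} (hle : ∀ ω, K ω ≤ N ω)
    (a b : ℕ) :
    {ω | K ω = a} ∩ {ω | N ω - K ω = b} = {ω | K ω = a} ∩ {ω | N ω = a + b} := by
  ext ω
  have := hle ω
  simp only [Set.mem_inter_iff, Set.mem_ofPred_eq]
  omega

/-- **Poisson thinning, joint version.**
If `N` is Poisson with rate `lam > 0` and, conditionally on `N = n`, `K` is binomial with
parameters `n` and `p` (the joint law is the bind of the Poisson pmf with the binomial kernel),
then `K` and `N - K` are independent, `K` is Poisson with rate `lam * p` and `N - K` is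
Poisson with rate `lam * (1 - p)`:
`P(K = a, N - K = b) = e^{-λp}(λp)^a/a! ⬝ e^{-λ(1-p)}(λ(1-p))^b/b!` for all `a b : ℕ`. -/
theorem poisson_binomial_thinning_joint
    {Ω : Type*} [MeasureSpace Ω] [IsProbabilityMeasure (ℙ : Measure Ω)]
    (N K : Ω → ℕ) (hNmeas : Measurable N) (hKmeas : Measurable K)
    (hle : ∀ ω, K ω ≤ N ω)
    (lam p : ℝ) (hlam : 0 < lam) (hp0 : 0 ≤ p) (hp1 : p ≤ 1)
    (hN : ∀ n : ℕ, ℙ {ω | N ω = n} =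
      ENNReal.ofReal (Real.exp (-lam) * lam ^ n / (Nat.factorial n)))
    (hK : ∀ n a : ℕ, a ≤ n → ℙ ({ω | K ω = a} ∩ {ω | N ω = n}) =
      ℙ {ω | N ω = n} *
        ENNReal.ofReal ((n.choose a : ℝ) * p ^ a * (1 - p) ^ (n - a))) :
    (IndepFun K (fun ω => N ω - K ω) ℙ) ∧
    (∀ a : ℕ, ℙ {ω | K ω = a} =
      ENNReal.ofReal (Real.exp (-(lam * p)) * (lam * p) ^ a / (Nat.factorial a))) ∧
    (∀ b : ℕ, ℙ {ω | N ω - K ω = b} =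
      ENNReal.ofReal (Real.exp (-(lam * (1 - p))) * (lam * (1 - p)) ^ b / (Nat.factorial b))) ∧
    (∀ a b : ℕ, ℙ ({ω | K ω = a} ∩ {ω | N ω - K ω = b}) =
      ENNReal.ofReal (Real.exp (-(lam * p)) * (lam * p) ^ a / (Nat.factorial a)) *
      ENNReal.ofReal
        (Real.exp (-(lam * (1 - p))) * (lam * (1 - p)) ^ b / (Nat.factorial b))) := by
  have hMmeas : Measurable fun ω => N ω - K ω := hNmeas.sub hKmeas
  have hq : 0 ≤ lam * (1 - p) := mul_nonneg hlam.le (sub_nonneg.2 hp1)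
  have hjoint (a b : ℕ) : ℙ ({ω | K ω = a} ∩ {ω | N ω - K ω = b}) =
      ENNReal.ofReal (Real.exp (-(lam * p)) * (lam * p) ^ a / (Nat.factorial a)) *
      ENNReal.ofReal
        (Real.exp (-(lam * (1 - p))) * (lam * (1 - p)) ^ b / (Nat.factorial b)) := by
    rw [setOf_eq_inter_setOf_sub_eq hle, hK _ _ (Nat.le_add_right a b), hN,
      Nat.add_sub_cancel_left, ← ENNReal.ofReal_mul (by positivity),
      poisson_mul_binomial_eq_poisson_mul_poisson, ENNReal.ofReal_mul (by positivity)]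
  have hKlaw :=
    measure_preimage_singleton_eq_of_joint_eq_mul hMmeas hjoint (tsum_ofReal_poisson hq)
  have hMlaw := measure_preimage_singleton_eq_of_joint_eq_mul hKmeas
    (fun b a => by rw [Set.inter_comm, mul_comm]; exact hjoint a b)
    (tsum_ofReal_poisson (mul_nonneg hlam.le hp0))
  refine ⟨indepFun_of_measure_inter_preimage_singleton_eq_mul hKmeas hMmeas fun a b => ?_,
    hKlaw, hMlaw, hjoint⟩
  rw [hKlaw, hMlaw]
  exact hjoint a b
end

section
/- Let G_1, …, G_m be independent random variables with G_i Gumbel distributed with location μ_i ∈ ℝ, and let G* = max_{1≤i≤m} G_i and I* = argmax_{1≤i≤m} G_i (the argmax is almost surely unique). Then for every k ∈ {1,…,m} and g ∈ ℝ, P(I* = k, G* ≤ g) = (exp(μ_k)/∑_{j=1}^m exp(μ_j)) · exp(−exp(−g)·∑_{j=1}^m exp(μ_j)). In particular P(I* = k) = exp(μ_k)/∑_{j=1}^m exp(μ_j), and G* and I* are independent. -/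
open MeasureTheory ProbabilityTheory Finset

/-!
By independence, the probability that `k` is the strict argmax and `G k ≤ g` is
`∫_{t ≤ g} ∏_{j ≠ k} P(G j < t) dP_{G k}(t)`. Writing the Gumbel distribution functions as
`F_c(t) = exp (-c e^{-t})` with `c = e^{μ}`, the product is `F_{S - c_k}` where `S = ∑ j, c j`,
and `F_{c_k}' · F_{S - c_k} = (c_k / S) · F_S'`, so the integral is `(c_k / S) · F_S(g)`.
Letting `g → ∞` gives the Gibbs law of the argmax.
-/

open Set Filter Topology Real

lemma lintegral_Iic_ofReal_eq_of_hasDerivAt {F f : ℝ → ℝ} {m : ℝ}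
    (hderiv : ∀ x, HasDerivAt F (f x) x) (hf : Continuous f) (hf_nonneg : ∀ x, 0 ≤ f x)
    (hF : Tendsto F atBot (𝓝 m)) (b : ℝ) :
    ∫⁻ x in Iic b, ENNReal.ofReal (f x) = ENNReal.ofReal (F b - m) := by
  have hint : IntegrableOn f (Iic b) := by
    refine integrableOn_Iic_of_intervalIntegral_norm_tendsto (F b - m) b (l := atBot)
      (fun i => hf.integrableOn_Icc.mono_set Ioc_subset_Icc_self) tendsto_id ?_
    have hFTC : ∀ i, ∫ x in id i..b, ‖f x‖ = F b - F i := fun i => by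
      simp_rw [Real.norm_of_nonneg (hf_nonneg _)]
      exact intervalIntegral.integral_eq_sub_of_hasDerivAt (fun x _ => hderiv x)
        (hf.intervalIntegrable _ _)
    simpa only [hFTC] using hF.const_sub (F b)
  rw [← ofReal_integral_eq_lintegral_ofReal hint (ae_of_all _ hf_nonneg),
    integral_Iic_of_hasDerivAt_of_tendsto' (fun x _ => hderiv x) hint hF]

/-- The Gumbel distribution function with location `log c`. In this parametrisation a product of
distribution functions (the law of a maximum of independent Gumbels) adds the parameters. -/
noncomputable def gumbelCDF (c t : ℝ) : ℝ := exp (-(c * exp (-t)))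

noncomputable def gumbelPDF (c t : ℝ) : ℝ := c * exp (-t) * gumbelCDF c t

lemma gumbelCDF_exp (μ t : ℝ) : gumbelCDF (exp μ) t = exp (-exp (-(t - μ))) := by
  rw [gumbelCDF, ← exp_add, neg_sub, sub_eq_add_neg]

lemma gumbelCDF_add (a b t : ℝ) : gumbelCDF (a + b) t = gumbelCDF a t * gumbelCDF b t := by
  simp only [gumbelCDF, ← exp_add]
  ring_nf

lemma gumbelCDF_sum {ι : Type*} (s : Finset ι) (c : ι → ℝ) (t : ℝ) :
    gumbelCDF (∑ j ∈ s, c j) t = ∏ j ∈ s, gumbelCDF (c j) t := by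
  simp only [gumbelCDF, Finset.sum_mul, ← Finset.sum_neg_distrib, exp_sum]

lemma gumbelPDF_mul_gumbelCDF {a b : ℝ} (hab : a + b ≠ 0) (t : ℝ) :
    gumbelPDF a t * gumbelCDF b t = a / (a + b) * gumbelPDF (a + b) t := by
  rw [gumbelPDF, gumbelPDF, gumbelCDF_add]
  field_simp

lemma gumbelCDF_pos (c t : ℝ) : 0 < gumbelCDF c t := exp_pos _

lemma gumbelPDF_nonneg {c : ℝ} (hc : 0 ≤ c) (t : ℝ) : 0 ≤ gumbelPDF c t :=
  mul_nonneg (mul_nonneg hc (exp_pos _).le) (gumbelCDF_pos c t).le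

lemma hasDerivAt_gumbelCDF (c t : ℝ) : HasDerivAt (gumbelCDF c) (gumbelPDF c t) t := by
  refine ((hasDerivAt_neg t).exp.const_mul c).neg.exp.congr_deriv ?_
  simp only [gumbelPDF, gumbelCDF, Pi.neg_apply]
  ring

lemma continuous_gumbelCDF (c : ℝ) : Continuous (gumbelCDF c) := by
  unfold gumbelCDF
  fun_prop

lemma continuous_gumbelPDF (c : ℝ) : Continuous (gumbelPDF c) := by
  unfold gumbelPDF gumbelCDF
  fun_prop

lemma tendsto_gumbelCDF_atBot {c : ℝ} (hc : 0 < c) : Tendsto (gumbelCDF c) atBot (𝓝 0) :=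
  tendsto_exp_atBot.comp <| tendsto_neg_atTop_atBot.comp <|
    (tendsto_exp_atTop.comp tendsto_neg_atBot_atTop).const_mul_atTop hc

lemma tendsto_gumbelCDF_atTop (c : ℝ) : Tendsto (gumbelCDF c) atTop (𝓝 1) := by
  have h := ((tendsto_exp_atBot.comp tendsto_neg_atTop_atBot).const_mul c).neg
  show Tendsto (fun t => exp (-(c * exp (-t)))) atTop (𝓝 1)
  simpa [Function.comp_def] using (continuous_exp.tendsto _).comp h

lemma lintegral_gumbelPDF_Iic {c : ℝ} (hc : 0 < c) (g : ℝ) :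
    ∫⁻ t in Iic g, ENNReal.ofReal (gumbelPDF c t) = ENNReal.ofReal (gumbelCDF c g) := by
  simpa using lintegral_Iic_ofReal_eq_of_hasDerivAt (hasDerivAt_gumbelCDF c)
    (continuous_gumbelPDF c) (gumbelPDF_nonneg hc.le) (tendsto_gumbelCDF_atBot hc) g

section Probability

variable {Ω : Type*} [MeasurableSpace Ω] {P : Measure Ω}

lemma map_eq_withDensity_gumbelPDF [IsFiniteMeasure P] {X : Ω → ℝ} (hX : Measurable X)
    {c : ℝ} (hc : 0 < c) (hX_cdf : ∀ g, P {ω | X ω ≤ g} = ENNReal.ofReal (gumbelCDF c g)) :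
    P.map X = volume.withDensity (fun t => ENNReal.ofReal (gumbelPDF c t)) := by
  refine Measure.ext_of_Iic _ _ fun g => ?_
  rw [Measure.map_apply hX measurableSet_Iic, withDensity_apply _ measurableSet_Iic,
    lintegral_gumbelPDF_Iic hc]
  exact hX_cdf g

lemma measure_lt_eq_gumbelCDF [IsFiniteMeasure P] {X : Ω → ℝ} (hX : Measurable X)
    {c : ℝ} (hc : 0 < c) (hX_cdf : ∀ g, P {ω | X ω ≤ g} = ENNReal.ofReal (gumbelCDF c g))
    (t : ℝ) : P {ω | X ω < t} = ENNReal.ofReal (gumbelCDF c t) := by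
  have hae : Iio t =ᵐ[P.map X] Iic t := by
    rw [map_eq_withDensity_gumbelPDF hX hc hX_cdf]
    exact (withDensity_absolutelyContinuous _ _).ae_eq Iio_ae_eq_Iic
  calc P {ω | X ω < t} = P.map X (Iio t) := (Measure.map_apply hX measurableSet_Iio).symm
    _ = P.map X (Iic t) := measure_congr hae
    _ = ENNReal.ofReal (gumbelCDF c t) := by
      rw [Measure.map_apply hX measurableSet_Iic]
      exact hX_cdf t

lemma tendsto_measure_inter_le_atTop (A : Set Ω) (X : Ω → ℝ) :
    Tendsto (fun g => P (A ∩ {ω | X ω ≤ g})) atTop (𝓝 (P A)) := by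
  have hmono : Monotone fun g : ℝ => A ∩ {ω | X ω ≤ g} :=
    fun a b hab ω hω => ⟨hω.1, le_trans hω.2 hab⟩
  have hunion : ⋃ g : ℝ, A ∩ {ω | X ω ≤ g} = A := by
    ext ω
    simp only [mem_iUnion, mem_inter_iff, mem_ofPred_eq]
    exact ⟨fun ⟨_, hA, _⟩ => hA, fun hA => ⟨X ω, hA, le_rfl⟩⟩
  have h := tendsto_measure_iUnion_atTop (μ := P) hmono
  rwa [hunion] at h

lemma ProbabilityTheory.IndepFun.measure_preimage_eq_lintegral [IsFiniteMeasure P]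
    {α β : Type*} [MeasurableSpace α] [MeasurableSpace β] {X : Ω → α} {Y : Ω → β}
    (hXY : IndepFun X Y P) (hX : Measurable X) (hY : Measurable Y)
    {s : Set (α × β)} (hs : MeasurableSet s) :
    P ((fun ω => (X ω, Y ω)) ⁻¹' s) = ∫⁻ x, P.map Y (Prod.mk x ⁻¹' s) ∂(P.map X) := by
  rw [← Measure.map_apply (hX.prodMk hY) hs,
    hXY.map_prod_eq_prod_map_map hX.aemeasurable hY.aemeasurable, Measure.prod_apply hs]

lemma measure_forall_lt_and_le_eq_lintegral {ι : Type*} [Fintype ι] {G : ι → Ω → ℝ}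
    (hmeas : ∀ i, Measurable (G i)) (hindep : iIndepFun G P) (k : ι) (g : ℝ) :
    P {ω | (∀ j, j ≠ k → G j ω < G k ω) ∧ G k ω ≤ g} =
      ∫⁻ t in Iic g, P {ω | ∀ j, j ≠ k → G j ω < t} ∂(P.map (G k)) := by
  classical
  have := hindep.isProbabilityMeasure
  let Y : Ω → (univ.erase k → ℝ) := fun ω j => G j ω
  have hY : Measurable Y := measurable_pi_lambda _ fun j => hmeas j
  have hXY : IndepFun (G k) Y P :=
    (hindep.indepFun_finset {k} (univ.erase k) (by simp) hmeas).comp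
      (measurable_pi_apply (⟨k, mem_singleton_self k⟩ : ({k} : Finset ι))) measurable_id
  have hlt : ∀ t, MeasurableSet {y : univ.erase k → ℝ | ∀ j, y j < t} := fun t => by
    simp only [ofPred_forall]
    exact .iInter fun j => measurableSet_lt (measurable_pi_apply j) measurable_const
  let s : Set (ℝ × (univ.erase k → ℝ)) := {p | (∀ j, p.2 j < p.1) ∧ p.1 ≤ g}
  have hs : MeasurableSet s := by
    refine measurableSet_setOfPred.2 (.and (.forall fun j => ?_) ?_) <;>
      apply measurableSet_setOfPred.1
    · exact measurableSet_lt ((measurable_pi_apply j).comp measurable_snd) measurable_fst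
    · exact measurableSet_le measurable_fst measurable_const
  have hslice : ∀ t, P.map Y (Prod.mk t ⁻¹' s) =
      (Iic g).indicator (fun t => P {ω | ∀ j, j ≠ k → G j ω < t}) t := fun t => by
    by_cases ht : t ≤ g
    · have : Prod.mk t ⁻¹' s = {y | ∀ j, y j < t} := by ext; simp [s, ht]
      rw [this, Measure.map_apply hY (hlt t), indicator_of_mem (Set.mem_Iic.2 ht)]
      congr 1
      ext ω
      simp [Y]
    · have : Prod.mk t ⁻¹' s = ∅ := by ext; simp [s, ht]
      rw [this, measure_empty, indicator_of_notMem (by simpa using ht)]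
  calc P {ω | (∀ j, j ≠ k → G j ω < G k ω) ∧ G k ω ≤ g}
      = P ((fun ω => (G k ω, Y ω)) ⁻¹' s) := by
        congr 1
        ext ω
        simp [s, Y]
    _ = ∫⁻ t, P.map Y (Prod.mk t ⁻¹' s) ∂(P.map (G k)) :=
        hXY.measure_preimage_eq_lintegral (hmeas k) hY hs
    _ = _ := by
        simp_rw [hslice]
        exact lintegral_indicator measurableSet_Iic _

lemma measure_forall_lt_and_le_of_gumbelCDF {ι : Type*} [Fintype ι] {G : ι → Ω → ℝ}
    (hmeas : ∀ i, Measurable (G i)) (hindep : iIndepFun G P) {c : ι → ℝ} (hc : ∀ i, 0 < c i)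
    (hG : ∀ i g, P {ω | G i ω ≤ g} = ENNReal.ofReal (gumbelCDF (c i) g)) (k : ι) (g : ℝ) :
    P {ω | (∀ j, j ≠ k → G j ω < G k ω) ∧ G k ω ≤ g} =
      ENNReal.ofReal ((c k / ∑ j, c j) * gumbelCDF (∑ j, c j) g) := by
  classical
  have := hindep.isProbabilityMeasure
  set T := ∑ j ∈ univ.erase k, c j
  have hsum : c k + T = ∑ j, c j := add_sum_erase _ _ (mem_univ k)
  have hpos : 0 < c k + T := add_pos_of_pos_of_nonneg (hc k) (sum_nonneg fun j _ => (hc j).le)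
  have hothers : ∀ t, P {ω | ∀ j, j ≠ k → G j ω < t} = ENNReal.ofReal (gumbelCDF T t) := by
    intro t
    have hinter : {ω | ∀ j, j ≠ k → G j ω < t} = ⋂ j ∈ univ.erase k, G j ⁻¹' Iio t := by
      ext
      simp
    rw [hinter, hindep.meas_biInter fun j _ => ⟨Iio t, measurableSet_Iio, rfl⟩, gumbelCDF_sum,
      ENNReal.ofReal_prod_of_nonneg fun j _ => (gumbelCDF_pos _ _).le]
    exact prod_congr rfl fun j _ => measure_lt_eq_gumbelCDF (hmeas j) (hc j) (hG j) t
  have hdensity : ∀ t, ENNReal.ofReal (gumbelPDF (c k) t) * ENNReal.ofReal (gumbelCDF T t) =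
      ENNReal.ofReal (c k / (c k + T)) * ENNReal.ofReal (gumbelPDF (c k + T) t) := fun t => by
    rw [← ENNReal.ofReal_mul (gumbelPDF_nonneg (hc k).le t), gumbelPDF_mul_gumbelCDF hpos.ne',
      ENNReal.ofReal_mul (div_nonneg (hc k).le hpos.le)]
  rw [measure_forall_lt_and_le_eq_lintegral hmeas hindep, map_eq_withDensity_gumbelPDF (hmeas k)
    (hc k) (hG k)]
  simp_rw [hothers]
  rw [setLIntegral_withDensity_eq_setLIntegral_mul _
    (continuous_gumbelPDF _).measurable.ennreal_ofReal
    (continuous_gumbelCDF _).measurable.ennreal_ofReal measurableSet_Iic]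
  simp only [Pi.mul_apply, hdensity]
  rw [lintegral_const_mul _ (continuous_gumbelPDF _).measurable.ennreal_ofReal,
    lintegral_gumbelPDF_Iic hpos, ← ENNReal.ofReal_mul (div_nonneg (hc k).le hpos.le), hsum]

end Probability

theorem gumbel_max_argmax_general
    {Ω : Type*} [MeasureSpace Ω]
    {ι : Type*} [Fintype ι]
    (G : ι → Ω → ℝ) (hmeas : ∀ i, Measurable (G i))
    (hindep : iIndepFun G ℙ)
    (μ : ι → ℝ)
    (hgumbel : ∀ i, ∀ g : ℝ,
      ℙ {ω | G i ω ≤ g} = ENNReal.ofReal (Real.exp (-Real.exp (-(g - μ i))))) :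
    -- joint law of the argmax and the max (this also expresses their independence)
    (∀ k : ι, ∀ g : ℝ,
      ℙ {ω | (∀ j, j ≠ k → G j ω < G k ω) ∧ G k ω ≤ g} =
        ENNReal.ofReal ((Real.exp (μ k) / ∑ j, Real.exp (μ j)) *
          Real.exp (-Real.exp (-g) * ∑ j, Real.exp (μ j)))) ∧
    -- the argmax has the Gibbs distribution
    (∀ k : ι, ℙ {ω | ∀ j, j ≠ k → G j ω < G k ω} =
      ENNReal.ofReal (Real.exp (μ k) / ∑ j, Real.exp (μ j))) := by
  have hjoint := measure_forall_lt_and_le_of_gumbelCDF hmeas hindep (fun i => exp_pos (μ i))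
    fun i g => by rw [hgumbel, gumbelCDF_exp]
  set S := ∑ j, exp (μ j)
  refine ⟨fun k g => by rw [hjoint, gumbelCDF, neg_mul, mul_comm S], fun k => ?_⟩
  have hlim : Tendsto (fun g => ENNReal.ofReal (exp (μ k) / S * gumbelCDF S g)) atTop
      (𝓝 (ENNReal.ofReal (exp (μ k) / S))) := by
    refine ENNReal.tendsto_ofReal ?_
    simpa using (tendsto_gumbelCDF_atTop S).const_mul (exp (μ k) / S)
  exact tendsto_nhds_unique (tendsto_measure_inter_le_atTop _ (G k))
    (hlim.congr fun g => (hjoint k g).symm)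

/-- **Max and argmax of independent Gumbels.**
Let `G i`, `i ∈ ι` (a nonempty finite index set), be independent Gumbel random variables
with locations `μ i`.  Then for every `k` and `g : ℝ`,
`P(I* = k, G* ≤ g) = (exp (μ k) / ∑ j, exp (μ j)) * exp (-exp (-g) * ∑ j, exp (μ j))`,
where `G* = max_i G i` and `I* = argmax_i G i` (a.s. unique, formalized as `G k` being the
strict maximum).  In particular `P(I* = k) = exp (μ k) / ∑ j, exp (μ j)`, and `G*` and `I*`
are independent. -/
theorem gumbel_max_argmax
    {Ω : Type*} [MeasureSpace Ω] [IsProbabilityMeasure (ℙ : Measure Ω)]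
    {ι : Type*} [Fintype ι] [Nonempty ι]
    (G : ι → Ω → ℝ) (hmeas : ∀ i, Measurable (G i))
    (hindep : iIndepFun G ℙ)
    (μ : ι → ℝ)
    (hgumbel : ∀ i, ∀ g : ℝ,
      ℙ {ω | G i ω ≤ g} = ENNReal.ofReal (Real.exp (-Real.exp (-(g - μ i))))) :
    -- joint law of the argmax and the max (this also expresses their independence)
    (∀ k : ι, ∀ g : ℝ,
      ℙ {ω | (∀ j, j ≠ k → G j ω < G k ω) ∧ G k ω ≤ g} =
        ENNReal.ofReal ((Real.exp (μ k) / ∑ j, Real.exp (μ j)) *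
          Real.exp (-Real.exp (-g) * ∑ j, Real.exp (μ j)))) ∧
    -- the argmax has the Gibbs distribution
    (∀ k : ι, ℙ {ω | ∀ j, j ≠ k → G j ω < G k ω} =
      ENNReal.ofReal (Real.exp (μ k) / ∑ j, Real.exp (μ j))) :=
  gumbel_max_argmax_general G hmeas hindep μ hgumbel
end

section
/- (Discrete Gumbel-Max trick) Let f : {1,…,m} → ℝ be a positive function and let G_1, …, G_m be independent standard Gumbel random variables (Gumbel distributed with location 0). Let I* = argmax_{1≤i≤m} (log f(i) + G_i), which is almost surely unique. Then for every k ∈ {1,…,m}, P(I* = k) = f(k) / ∑_{j=1}^m f(j). -/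
/-!
If `G` is standard Gumbel, then `P(log w + G < t) = exp (-w e^{-t})`, and these probabilities
multiply over independent variables by adding the weights `w`. Conditioning on `G k`, the event
that `k` is the strict argmax of `log (f i) + G i` therefore has probability `exp (-c e^{-G k})`
with `c = ∑_{j ≠ k} f j / f k`. Multiplied by the Gumbel density `e^{-t} exp (-e^{-t})`, this
integrand is `(1 + c)⁻¹` times the Gumbel density with location `log (1 + c)`, so the probability
is `(1 + c)⁻¹ = f k / ∑ j, f j`.
-/

open MeasureTheory ProbabilityTheory Finset Set Filter Topology Real

namespace ProbabilityTheory

/-- For `a = exp m` this is the CDF of the Gumbel law with location `m`; for `a = 0` it is `1`. -/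
noncomputable def gumbelCDF (a x : ℝ) : ℝ := exp (-(a * exp (-x)))

noncomputable def gumbelPDF (a x : ℝ) : ℝ := a * exp (-x) * gumbelCDF a x

section Real

variable {a : ℝ}

lemma gumbelCDF_le_one (ha : 0 ≤ a) (x : ℝ) : gumbelCDF a x ≤ 1 :=
  exp_le_one_iff.2 (neg_nonpos.2 (mul_nonneg ha (exp_pos _).le))

lemma gumbelCDF_add (a x y : ℝ) : gumbelCDF a (x + y) = gumbelCDF (a * exp (-y)) x := by
  simp only [gumbelCDF, neg_add, exp_add]
  ring_nf

lemma prod_gumbelCDF {ι : Type*} (s : Finset ι) (a : ι → ℝ) (x : ℝ) :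
    ∏ i ∈ s, gumbelCDF (a i) x = gumbelCDF (∑ i ∈ s, a i) x := by
  simp only [gumbelCDF, ← exp_sum, sum_mul, sum_neg_distrib]

lemma gumbelPDF_mul_gumbelCDF {b : ℝ} (hab : a + b ≠ 0) (x : ℝ) :
    gumbelPDF a x * gumbelCDF b x = a / (a + b) * gumbelPDF (a + b) x := by
  have hprod : gumbelCDF a x * gumbelCDF b x = gumbelCDF (a + b) x := by
    rw [gumbelCDF, gumbelCDF, gumbelCDF, ← exp_add]
    ring_nf
  rw [gumbelPDF, gumbelPDF, mul_assoc, hprod]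
  field_simp

lemma gumbelPDF_nonneg (ha : 0 ≤ a) (x : ℝ) : 0 ≤ gumbelPDF a x := by
  unfold gumbelPDF gumbelCDF
  positivity

lemma continuous_gumbelPDF (a : ℝ) : Continuous (gumbelPDF a) := by
  unfold gumbelPDF gumbelCDF
  fun_prop

lemma hasDerivAt_gumbelCDF (a x : ℝ) : HasDerivAt (gumbelCDF a) (gumbelPDF a x) x :=
  (((hasDerivAt_neg x).exp.const_mul a).neg).exp.congr_deriv <| by
    simp [gumbelPDF, gumbelCDF, mul_comm]

lemma tendsto_gumbelCDF_atBot (ha : 0 < a) : Tendsto (gumbelCDF a) atBot (𝓝 0) :=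
  tendsto_exp_atBot.comp <| tendsto_neg_atTop_atBot.comp <|
    (tendsto_exp_atTop.comp tendsto_neg_atBot_atTop).const_mul_atTop ha

lemma tendsto_gumbelCDF_atTop (a : ℝ) : Tendsto (gumbelCDF a) atTop (𝓝 1) := by
  have h : Tendsto (fun x => -(a * exp (-x))) atTop (𝓝 0) := by
    simpa [Function.comp_def] using
      ((tendsto_exp_atBot.comp tendsto_neg_atTop_atBot).const_mul a).neg
  rw [← exp_zero]
  exact (continuous_exp.tendsto 0).comp h

lemma integrable_gumbelPDF (ha : 0 ≤ a) : Integrable (gumbelPDF a) := by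
  refine integrable_of_intervalIntegral_norm_bounded (l := atTop) (a := Neg.neg) (b := id) 1
    (fun _ => (continuous_gumbelPDF a).integrableOn_Ioc) tendsto_neg_atTop_atBot tendsto_id
    (Eventually.of_forall fun x => ?_)
  simp only [norm_of_nonneg (gumbelPDF_nonneg ha _), id]
  rw [intervalIntegral.integral_eq_sub_of_hasDerivAt (fun y _ => hasDerivAt_gumbelCDF a y)
    ((continuous_gumbelPDF a).intervalIntegrable _ _)]
  have : 0 < gumbelCDF a (-x) := exp_pos _
  linarith [gumbelCDF_le_one ha x]

lemma integral_gumbelPDF (ha : 0 < a) : ∫ x, gumbelPDF a x = 1 := by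
  simpa using integral_of_hasDerivAt_of_tendsto (hasDerivAt_gumbelCDF a)
    (integrable_gumbelPDF ha.le) (tendsto_gumbelCDF_atBot ha) (tendsto_gumbelCDF_atTop a)

lemma setIntegral_gumbelPDF_Iic (ha : 0 < a) (x : ℝ) :
    ∫ y in Iic x, gumbelPDF a y = gumbelCDF a x := by
  simpa using integral_Iic_of_hasDerivAt_of_tendsto' (fun y _ => hasDerivAt_gumbelCDF a y)
    (integrable_gumbelPDF ha.le).integrableOn (tendsto_gumbelCDF_atBot ha)

lemma setLIntegral_gumbelPDF (ha : 0 ≤ a) (s : Set ℝ) :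
    ∫⁻ x in s, ENNReal.ofReal (gumbelPDF a x) = ENNReal.ofReal (∫ x in s, gumbelPDF a x) :=
  (ofReal_integral_eq_lintegral_ofReal (integrable_gumbelPDF ha).integrableOn
    (ae_of_all _ (gumbelPDF_nonneg ha))).symm

end Real

noncomputable def gumbelMeasure : Measure ℝ :=
  volume.withDensity fun x => ENNReal.ofReal (gumbelPDF 1 x)

instance : NullSingletonClass gumbelMeasure := by
  unfold gumbelMeasure
  infer_instance

lemma gumbelMeasure_Iic (x : ℝ) : gumbelMeasure (Iic x) = ENNReal.ofReal (gumbelCDF 1 x) := by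
  rw [gumbelMeasure, withDensity_apply _ measurableSet_Iic, setLIntegral_gumbelPDF zero_le_one,
    setIntegral_gumbelPDF_Iic one_pos]

lemma gumbelMeasure_Iio (x : ℝ) : gumbelMeasure (Iio x) = ENNReal.ofReal (gumbelCDF 1 x) := by
  rw [measure_congr Iio_ae_eq_Iic, gumbelMeasure_Iic]

instance : IsProbabilityMeasure gumbelMeasure where
  measure_univ := by
    rw [gumbelMeasure, withDensity_apply _ MeasurableSet.univ, setLIntegral_gumbelPDF zero_le_one,
      setIntegral_univ, integral_gumbelPDF one_pos, ENNReal.ofReal_one]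

lemma lintegral_gumbelCDF_gumbelMeasure {c : ℝ} (hc : 0 ≤ c) :
    ∫⁻ x, ENNReal.ofReal (gumbelCDF c x) ∂gumbelMeasure = ENNReal.ofReal ((1 + c)⁻¹) := by
  have h1c : 0 < 1 + c := by linarith
  have hdensity (x : ℝ) : ENNReal.ofReal (gumbelPDF 1 x) * ENNReal.ofReal (gumbelCDF c x) =
      ENNReal.ofReal ((1 + c)⁻¹) * ENNReal.ofReal (gumbelPDF (1 + c) x) := by
    rw [← ENNReal.ofReal_mul (gumbelPDF_nonneg zero_le_one x), ← ENNReal.ofReal_mul (by positivity),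
      gumbelPDF_mul_gumbelCDF h1c.ne', one_div]
  rw [gumbelMeasure, lintegral_withDensity_eq_lintegral_mul₀
      (continuous_gumbelPDF 1).measurable.ennreal_ofReal.aemeasurable
      (by unfold gumbelCDF; fun_prop)]
  simp only [Pi.mul_apply, hdensity]
  rw [lintegral_const_mul _ (continuous_gumbelPDF _).measurable.ennreal_ofReal,
    ← setLIntegral_univ, setLIntegral_gumbelPDF h1c.le, setIntegral_univ, integral_gumbelPDF h1c,
    ENNReal.ofReal_one, mul_one]

section Probability

variable {Ω : Type*} [MeasurableSpace Ω] {μ : Measure Ω}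

lemma map_eq_gumbelMeasure [IsProbabilityMeasure μ] {X : Ω → ℝ} (hX : Measurable X)
    (hcdf : ∀ x, μ {ω | X ω ≤ x} = ENNReal.ofReal (exp (-exp (-x)))) :
    μ.map X = gumbelMeasure := by
  have : IsProbabilityMeasure (μ.map X) := Measure.isProbabilityMeasure_map hX.aemeasurable
  refine Measure.ext_of_Iic _ _ fun x => ?_
  rw [Measure.map_apply hX measurableSet_Iic, gumbelMeasure_Iic, gumbelCDF, one_mul]
  exact hcdf x

lemma measure_log_add_lt_of_map_eq_gumbelMeasure {X : Ω → ℝ} (hX : Measurable X)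
    (hlaw : μ.map X = gumbelMeasure) {w : ℝ} (hw : 0 < w) (t : ℝ) :
    μ {ω | log w + X ω < t} = ENNReal.ofReal (gumbelCDF w t) := by
  have hset : {ω | log w + X ω < t} = X ⁻¹' Iio (t + -log w) := by
    ext ω
    simp only [Set.mem_ofPred_eq, Set.mem_preimage, Set.mem_Iio]
    constructor <;> intro <;> linarith
  rw [hset, ← Measure.map_apply hX measurableSet_Iio, hlaw, gumbelMeasure_Iio, gumbelCDF_add,
    neg_neg, exp_log hw, one_mul]

lemma iIndepFun.measure_biInter_log_add_lt {ι : Type*} {G : ι → Ω → ℝ} (hindep : iIndepFun G μ)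
    (hmeas : ∀ i, Measurable (G i)) (hlaw : ∀ i, μ.map (G i) = gumbelMeasure) (s : Finset ι)
    {w : ι → ℝ} (hw : ∀ i ∈ s, 0 < w i) (t : ℝ) :
    μ (⋂ i ∈ s, {ω | log (w i) + G i ω < t}) =
      ENNReal.ofReal (gumbelCDF (∑ i ∈ s, w i) t) := by
  calc μ (⋂ i ∈ s, {ω | log (w i) + G i ω < t})
      = ∏ i ∈ s, μ {ω | log (w i) + G i ω < t} :=
        hindep.measure_inter_preimage_eq_mul s (sets := fun i => {x | log (w i) + x < t})
          fun i _ => measurableSet_lt (measurable_const.add measurable_id) measurable_const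
    _ = ∏ i ∈ s, ENNReal.ofReal (gumbelCDF (w i) t) :=
        prod_congr rfl fun i hi =>
          measure_log_add_lt_of_map_eq_gumbelMeasure (hmeas i) (hlaw i) (hw i hi) t
    _ = ENNReal.ofReal (gumbelCDF (∑ i ∈ s, w i) t) := by
        rw [← ENNReal.ofReal_prod_of_nonneg (f := fun i => gumbelCDF (w i) t)
          fun i _ => (exp_pos _).le, prod_gumbelCDF]

lemma IndepFun.measure_preimage_prodMk_eq_lintegral [IsFiniteMeasure μ] {α β : Type*}
    [MeasurableSpace α] [MeasurableSpace β] {X : Ω → α} {Y : Ω → β} (hXY : IndepFun X Y μ)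
    (hX : Measurable X) (hY : Measurable Y) {s : Set (α × β)} (hs : MeasurableSet s) :
    μ ((fun ω => (X ω, Y ω)) ⁻¹' s) = ∫⁻ x, μ.map Y (Prod.mk x ⁻¹' s) ∂μ.map X := by
  rw [← Measure.map_apply (hX.prodMk hY) hs,
    (indepFun_iff_map_prod_eq_prod_map_map hX.aemeasurable hY.aemeasurable).1 hXY,
    Measure.prod_apply hs]

lemma iIndepFun.measure_forall_log_add_lt [IsFiniteMeasure μ] {ι : Type*} {G : ι → Ω → ℝ}
    (hindep : iIndepFun G μ) (hmeas : ∀ i, Measurable (G i))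
    (hlaw : ∀ i, μ.map (G i) = gumbelMeasure) {w : ι → ℝ} (hw : ∀ i, 0 < w i) {s : Finset ι}
    {k : ι} (hk : k ∉ s) :
    μ {ω | ∀ i ∈ s, log (w i) + G i ω < log (w k) + G k ω} =
      ENNReal.ofReal (w k / (w k + ∑ i ∈ s, w i)) := by
  let Y : Ω → s → ℝ := fun ω i => G i ω
  have hY : Measurable Y := measurable_pi_lambda _ fun i => hmeas i
  have hindepY : IndepFun (G k) Y μ :=
    (hindep.indepFun_finset {k} s (disjoint_singleton_left.2 hk) hmeas).comp
      (measurable_pi_apply (⟨k, mem_singleton_self k⟩ : ({k} : Finset ι))) measurable_id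
  let B : Set (ℝ × (s → ℝ)) := {p | ∀ i : s, log (w i) + p.2 i < log (w k) + p.1}
  have hB : MeasurableSet B := by
    simp only [B, Set.ofPred_forall]
    exact MeasurableSet.iInter fun i => measurableSet_lt (by fun_prop) (by fun_prop)
  have hevent : {ω | ∀ i ∈ s, log (w i) + G i ω < log (w k) + G k ω} =
      (fun ω => (G k ω, Y ω)) ⁻¹' B := by
    ext ω
    simp [B, Y]
  have hslice t : μ.map Y (Prod.mk t ⁻¹' B) =
      ENNReal.ofReal (gumbelCDF ((∑ i ∈ s, w i) / w k) t) := by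
    rw [Measure.map_apply hY (measurable_prodMk_left hB)]
    convert hindep.measure_biInter_log_add_lt hmeas hlaw s (fun i _ => hw i) (log (w k) + t)
      using 2
    · ext ω
      simp [B, Y]
    · rw [add_comm, gumbelCDF_add, exp_neg, exp_log (hw k), div_eq_mul_inv]
  rw [hevent, hindepY.measure_preimage_prodMk_eq_lintegral (hmeas k) hY hB, hlaw k,
    lintegral_congr hslice, lintegral_gumbelCDF_gumbelMeasure
      (div_nonneg (sum_nonneg fun i _ => (hw i).le) (hw k).le),
    one_add_div (hw k).ne', inv_div]

end Probability

end ProbabilityTheory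

theorem gumbel_max_trick_general
    {Ω : Type*} [MeasureSpace Ω] [IsProbabilityMeasure (ℙ : Measure Ω)]
    {ι : Type*} [Fintype ι]
    (f : ι → ℝ) (hf : ∀ i, 0 < f i)
    (G : ι → Ω → ℝ) (hmeas : ∀ i, Measurable (G i))
    (hindep : iIndepFun G ℙ)
    (hgumbel : ∀ i, ∀ g : ℝ,
      ℙ {ω | G i ω ≤ g} = ENNReal.ofReal (Real.exp (-Real.exp (-g)))) :
    ∀ k : ι,
      ℙ {ω | ∀ j, j ≠ k → Real.log (f j) + G j ω < Real.log (f k) + G k ω} =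
        ENNReal.ofReal (f k / ∑ j, f j) := by
  classical
  intro k
  have hevent : {ω | ∀ j, j ≠ k → log (f j) + G j ω < log (f k) + G k ω} =
      {ω | ∀ j ∈ univ.erase k, log (f j) + G j ω < log (f k) + G k ω} := by
    simp
  rw [hevent, hindep.measure_forall_log_add_lt hmeas
      (fun i => map_eq_gumbelMeasure (hmeas i) (hgumbel i)) hf (notMem_erase k univ),
    add_sum_erase _ _ (mem_univ k)]

/-- **The discrete Gumbel-Max trick.**
Let `f : ι → ℝ` be positive on a nonempty finite set `ι` and let `G i` be i.i.d. standard
Gumbel random variables.  The argmax `I*` of `log (f i) + G i` (a.s. unique, formalized as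
the index attaining the strict maximum) satisfies `P(I* = k) = f k / ∑ j, f j`. -/
theorem gumbel_max_trick
    {Ω : Type*} [MeasureSpace Ω] [IsProbabilityMeasure (ℙ : Measure Ω)]
    {ι : Type*} [Fintype ι] [Nonempty ι]
    (f : ι → ℝ) (hf : ∀ i, 0 < f i)
    (G : ι → Ω → ℝ) (hmeas : ∀ i, Measurable (G i))
    (hindep : iIndepFun G ℙ)
    (hgumbel : ∀ i, ∀ g : ℝ,
      ℙ {ω | G i ω ≤ g} = ENNReal.ofReal (Real.exp (-Real.exp (-g)))) :
    ∀ k : ι,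
      ℙ {ω | ∀ j, j ≠ k → Real.log (f j) + G j ω < Real.log (f k) + G k ω} =
        ENNReal.ofReal (f k / ∑ j, f j) :=
  gumbel_max_trick_general f hf G hmeas hindep hgumbel
end

section
/- (Runtime of rejection sampling with oracle adaptive bounds) Let μ be a σ-finite measure on ℝⁿ, and let P, Q be finite nonzero measures on ℝⁿ with densities f and g with respect to μ, such that f and g have the same support. Let (M_i)_{i≥1} be constants with f(x)/g(x) ≤ M_i for all x in the support of g and all i. Let (X_i)_{i≥1} be i.i.d. with distribution Q(·)/Q(ℝⁿ) and (U_i)_{i≥1} i.i.d. uniform on [0,1], all independent, and let K = min{i ≥ 1 : U_i < f(X_i)/(g(X_i)M_i)}. Then P(K > k) = ∏_{i=1}^k (1 − ρ_i) for every k ∈ ℕ, where ρ_i = P(ℝⁿ)/(Q(ℝⁿ)M_i). -/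
open MeasureTheory ProbabilityTheory Finset
open scoped ENNReal
open Set Filter Topology

/-!
Conditionally on the proposal `x`, round `i` accepts with probability `f x / (g x * M i)`, since
`U i` is uniform and independent of `X i`. Integrating this against the law `g μ / Q(ℝⁿ)` of
`X i` cancels `g` and leaves `ρ i = P(ℝⁿ) / (Q(ℝⁿ) M i)`. The rounds are independent, so the
probability that the first `k` rounds all reject is `∏ (1 - ρ i)`.
-/

theorem measure_Iio_eq_ofReal_of_measure_Iic {ν : Measure ℝ}
    (hν : ∀ t ∈ Icc (0 : ℝ) 1, ν (Iic t) = ENNReal.ofReal t) {t : ℝ}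
    (ht : t ∈ Icc (0 : ℝ) 1) :
    ν (Iio t) = ENNReal.ofReal t := by
  rcases ht.1.eq_or_lt with rfl | ht0
  · rw [ENNReal.ofReal_zero]
    exact measure_mono_null Set.Iio_subset_Iic_self
      (by simpa using hν 0 ⟨le_rfl, zero_le_one⟩)
  set s : ℕ → ℝ := fun m => t - t / (m + 1)
  have hs_lim : Tendsto s atTop (𝓝 t) := by
    simpa using tendsto_const_nhds.sub
      (tendsto_const_div_atTop_nhds_zero_nat t |>.comp (tendsto_add_atTop_nat 1))
  have hs_lt : ∀ m, s m < t := fun m => sub_lt_self t (by positivity)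
  have hs_mem : ∀ m, s m ∈ Icc (0 : ℝ) 1 :=
    fun m => ⟨sub_nonneg.2 (div_le_self ht0.le (by simp)), (hs_lt m).le.trans ht.2⟩
  have hs_mono : Monotone s := fun m m' h =>
    sub_le_sub_left (div_le_div_of_nonneg_left ht0.le (by positivity) (by gcongr)) t
  refine tendsto_nhds_unique ?_
    ((ENNReal.tendsto_ofReal hs_lim).congr fun m => (hν _ (hs_mem m)).symm)
  rw [← iUnion_Iic_eq_Iio_of_lt_of_tendsto hs_lt hs_lim]
  exact tendsto_measure_iUnion_atTop fun m m' h => Iic_subset_Iic.2 (hs_mono h)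

theorem measure_lt_comp_eq_lintegral_of_indepFun {Ω α : Type*} [MeasurableSpace Ω]
    [MeasurableSpace α] {ν : Measure Ω} [IsFiniteMeasure ν] {X : Ω → α} {U : Ω → ℝ}
    (hX : Measurable X) (hU : Measurable U) (hXU : IndepFun X U ν)
    (hU_cdf : ∀ t ∈ Icc (0 : ℝ) 1, ν {ω | U ω ≤ t} = ENNReal.ofReal t)
    {h : α → ℝ} (hh : Measurable h) (hh_mem : ∀ x, h x ∈ Icc (0 : ℝ) 1) :
    ν {ω | U ω < h (X ω)} = ∫⁻ x, ENNReal.ofReal (h x) ∂ν.map X := by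
  have hS : MeasurableSet {p : α × ℝ | p.2 < h p.1} :=
    measurableSet_lt measurable_snd (hh.comp measurable_fst)
  have hU_law : ∀ t ∈ Icc (0 : ℝ) 1, ν.map U (Iic t) = ENNReal.ofReal t := fun t ht => by
    rw [Measure.map_apply hU measurableSet_Iic]
    exact hU_cdf t ht
  calc ν {ω | U ω < h (X ω)} = ν.map (fun ω => (X ω, U ω)) {p | p.2 < h p.1} :=
        (Measure.map_apply (hX.prodMk hU) hS).symm
    _ = ((ν.map X).prod (ν.map U)) {p | p.2 < h p.1} := by
        rw [(indepFun_iff_map_prod_eq_prod_map_map hX.aemeasurable hU.aemeasurable).1 hXU]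
    _ = ∫⁻ x, ν.map U (Iio (h x)) ∂ν.map X := Measure.prod_apply hS
    _ = _ := lintegral_congr fun x => measure_Iio_eq_ofReal_of_measure_Iic hU_law (hh_mem x)

theorem lintegral_ofReal_div_withDensity {α : Type*} [MeasurableSpace α] {μ : Measure α}
    {f g : α → ℝ} (hf : Measurable f) (hg : Measurable g) (hg0 : ∀ x, 0 ≤ g x)
    (hfg : ∀ x, g x = 0 → f x = 0) :
    ∫⁻ x, ENNReal.ofReal (f x / g x) ∂μ.withDensity (fun x => ENNReal.ofReal (g x)) =
      ∫⁻ x, ENNReal.ofReal (f x) ∂μ := by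
  rw [lintegral_withDensity_eq_lintegral_mul _ hg.ennreal_ofReal
    (g := fun x => ENNReal.ofReal (f x / g x)) (hf.div hg).ennreal_ofReal]
  refine lintegral_congr fun x => ?_
  rw [Pi.mul_apply, ← ENNReal.ofReal_mul (hg0 x)]
  rcases eq_or_ne (g x) 0 with hx | hx
  · simp [hx, hfg x hx]
  · rw [mul_div_cancel₀ _ hx]

theorem ENNReal.inv_mul_inv_ofReal_mul {a b : ℝ≥0∞} (ha : a ≠ 0) (ha' : a ≠ ∞) (hb : b ≠ ∞)
    {c : ℝ} (hc : 0 < c) :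
    a⁻¹ * ((ENNReal.ofReal c)⁻¹ * b) = ENNReal.ofReal (b.toReal / (a.toReal * c)) := by
  rw [ENNReal.ofReal_div_of_pos (_root_.mul_pos (ENNReal.toReal_pos ha ha') hc),
    ENNReal.ofReal_mul ENNReal.toReal_nonneg, ENNReal.ofReal_toReal ha', ENNReal.ofReal_toReal hb,
    ENNReal.div_eq_inv_mul, ENNReal.mul_inv (Or.inl ha) (Or.inl ha'), mul_assoc]

theorem pos_of_div_le_of_support_eq {α : Type*} {f g : α → ℝ} (hg0 : ∀ x, 0 ≤ g x)
    (hsupp : Function.support f = Function.support g) {c : ℝ}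
    (hc : ∀ x ∈ Function.support g, f x / g x ≤ c) {x₀ : α} (hx₀ : 0 < f x₀) : 0 < c := by
  have hx₀g : x₀ ∈ Function.support g := hsupp ▸ hx₀.ne'
  exact (div_pos hx₀ ((hg0 x₀).lt_of_ne' hx₀g)).trans_le (hc x₀ hx₀g)

theorem div_mul_mem_Icc_of_div_le {α : Type*} {f g : α → ℝ} (hf0 : ∀ x, 0 ≤ f x)
    (hg0 : ∀ x, 0 ≤ g x) {c : ℝ} (hc_pos : 0 < c)
    (hc : ∀ x ∈ Function.support g, f x / g x ≤ c) (x : α) :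
    f x / (g x * c) ∈ Icc (0 : ℝ) 1 := by
  rw [← div_div]
  refine ⟨div_nonneg (div_nonneg (hf0 x) (hg0 x)) hc_pos.le, div_le_one_of_le₀ ?_ hc_pos.le⟩
  by_cases hx : g x = 0
  · -- division by zero gives `0`
    simpa [hx] using hc_pos.le
  · exact hc x hx

theorem measure_uniform_lt_density_ratio {Ω α : Type*} [MeasurableSpace Ω] [MeasurableSpace α]
    {ν : Measure Ω} [IsFiniteMeasure ν] {μ P Q : Measure α} [IsFiniteMeasure P]
    [IsFiniteMeasure Q] (hQ : Q ≠ 0) {f g : α → ℝ} (hf : Measurable f) (hg : Measurable g)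
    (hg0 : ∀ x, 0 ≤ g x) (hfg : ∀ x, g x = 0 → f x = 0)
    (hP_univ : P univ = ∫⁻ x, ENNReal.ofReal (f x) ∂μ)
    (hQ_eq : Q = μ.withDensity fun x => ENNReal.ofReal (g x))
    {c : ℝ} (hc : 0 < c) (h_mem : ∀ x, f x / (g x * c) ∈ Icc (0 : ℝ) 1)
    {X : Ω → α} {U : Ω → ℝ} (hX : Measurable X) (hU : Measurable U) (hXU : IndepFun X U ν)
    (hX_law : ν.map X = (Q univ)⁻¹ • Q)
    (hU_cdf : ∀ t ∈ Icc (0 : ℝ) 1, ν {ω | U ω ≤ t} = ENNReal.ofReal t) :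
    ν {ω | U ω < f (X ω) / (g (X ω) * c)} =
      ENNReal.ofReal ((P univ).toReal / ((Q univ).toReal * c)) := by
  have h_ratio :
      ∫⁻ x, ENNReal.ofReal (f x / (g x * c)) ∂Q = (ENNReal.ofReal c)⁻¹ * P univ := by
    simp_rw [← div_div, ENNReal.ofReal_div_of_pos hc, ENNReal.div_eq_inv_mul]
    rw [lintegral_const_mul _ (by fun_prop : Measurable fun x => ENNReal.ofReal (f x / g x)),
      hQ_eq, lintegral_ofReal_div_withDensity hf hg hg0 hfg, hP_univ]
  rw [measure_lt_comp_eq_lintegral_of_indepFun hX hU hXU hU_cdf (by fun_prop) h_mem, hX_law,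
    lintegral_smul_measure, smul_eq_mul, h_ratio]
  exact ENNReal.inv_mul_inv_ofReal_mul (Measure.measure_univ_ne_zero.2 hQ)
    (measure_ne_top Q univ) (measure_ne_top P univ) hc

theorem exists_pos_of_lintegral_ofReal_ne_zero {α : Type*} [MeasurableSpace α] {μ : Measure α}
    {f : α → ℝ} (h : ∫⁻ x, ENNReal.ofReal (f x) ∂μ ≠ 0) : ∃ x, 0 < f x := by
  by_contra! hf
  simp [ENNReal.ofReal_eq_zero.2 (hf _)] at h

theorem ProbabilityTheory.iIndepFun.measure_forall_lt_notMem {Ω β : Type*}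
    [MeasurableSpace Ω] [MeasurableSpace β] {ν : Measure Ω} [IsProbabilityMeasure ν]
    {Y : ℕ → Ω → β} (hY : iIndepFun Y ν) (hY_meas : ∀ i, Measurable (Y i))
    {S : ℕ → Set β} (hS : ∀ i, MeasurableSet (S i)) (k : ℕ) :
    ν {ω | ∀ i < k, Y i ω ∉ S i} = ∏ i ∈ Finset.range k, (1 - ν (Y i ⁻¹' S i)) := by
  have h_inter : {ω | ∀ i < k, Y i ω ∉ S i} = ⋂ i ∈ Finset.range k, Y i ⁻¹' (S i)ᶜ := by
    ext ω
    simp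
  rw [h_inter, hY.measure_inter_preimage_eq_mul _ fun i _ => (hS i).compl]
  exact Finset.prod_congr rfl fun i _ => by
    rw [preimage_compl, prob_compl_eq_one_sub (hY_meas i (hS i))]

theorem oracle_rejection_sampling_runtime_general
    {Ω : Type*} [MeasureSpace Ω] [IsProbabilityMeasure (ℙ : Measure Ω)]
    {n : ℕ} (μ P Q : Measure (Fin n → ℝ))
    [IsFiniteMeasure P] [IsFiniteMeasure Q] (hP : P ≠ 0) (hQ : Q ≠ 0)
    (f g : (Fin n → ℝ) → ℝ) (hfmeas : Measurable f) (hgmeas : Measurable g)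
    (hf0 : ∀ x, 0 ≤ f x) (hg0 : ∀ x, 0 ≤ g x)
    (hPd : ∀ B, MeasurableSet B → P B = ∫⁻ x in B, ENNReal.ofReal (f x) ∂μ)
    (hQd : ∀ B, MeasurableSet B → Q B = ∫⁻ x in B, ENNReal.ofReal (g x) ∂μ)
    (hsupp : Function.support f = Function.support g)
    (M : ℕ → ℝ)
    (hbound : ∀ i, ∀ x ∈ Function.support g, f x / g x ≤ M i)
    (X : ℕ → Ω → (Fin n → ℝ)) (U : ℕ → Ω → ℝ)
    (hXmeas : ∀ i, Measurable (X i)) (hUmeas : ∀ i, Measurable (U i))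
    (hX : ∀ i, ∀ B, MeasurableSet B → ℙ {ω | X i ω ∈ B} = Q B / Q Set.univ)
    (hU : ∀ i, ∀ t ∈ Set.Icc (0:ℝ) 1, ℙ {ω | U i ω ≤ t} = ENNReal.ofReal t)
    (hpairs : iIndepFun (fun i ω => (X i ω, U i ω)) ℙ)
    (hXU : ∀ i, IndepFun (X i) (U i) ℙ) :
    ∀ k : ℕ, ℙ {ω | ∀ i < k, ¬ (U i ω < f (X i ω) / (g (X i ω) * M i))} =
      ENNReal.ofReal (∏ i ∈ Finset.range k,
        (1 - (P Set.univ).toReal / ((Q Set.univ).toReal * M i))) := by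
  intro k
  set ρ : ℕ → ℝ := fun i => (P univ).toReal / ((Q univ).toReal * M i)
  have hfg : ∀ x, g x = 0 → f x = 0 := fun x hx =>
    Function.notMem_support.1 (hsupp ▸ Function.notMem_support.2 hx)
  have hP_univ : P univ = ∫⁻ x, ENNReal.ofReal (f x) ∂μ := by
    rw [hPd univ .univ, setLIntegral_univ]
  obtain ⟨x₀, hx₀⟩ :=
    exists_pos_of_lintegral_ofReal_ne_zero (hP_univ ▸ Measure.measure_univ_ne_zero.2 hP)
  have hM : ∀ i, 0 < M i := fun i => pos_of_div_le_of_support_eq hg0 hsupp (hbound i) hx₀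
  have hQ_eq : Q = μ.withDensity fun x => ENNReal.ofReal (g x) :=
    Measure.ext fun B hB => by rw [hQd B hB, withDensity_apply _ hB]
  have hX_law : ∀ i, Measure.map (X i) ℙ = (Q univ)⁻¹ • Q := fun i => Measure.ext fun B hB => by
    rw [Measure.map_apply (hXmeas i) hB, Measure.smul_apply, smul_eq_mul,
      ← ENNReal.div_eq_inv_mul]
    exact hX i B hB
  have h_accept : ∀ i, ℙ {ω | U i ω < f (X i ω) / (g (X i ω) * M i)} = ENNReal.ofReal (ρ i) :=
    fun i => measure_uniform_lt_density_ratio hQ hfmeas hgmeas hg0 hfg hP_univ hQ_eq (hM i)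
      (div_mul_mem_Icc_of_div_le hf0 hg0 (hM i) (hbound i)) (hXmeas i) (hUmeas i) (hXU i)
      (hX_law i) (hU i)
  have hρ_nonneg : ∀ i, 0 ≤ ρ i := fun i =>
    div_nonneg ENNReal.toReal_nonneg (mul_nonneg ENNReal.toReal_nonneg (hM i).le)
  have hρ_le : ∀ i, ρ i ≤ 1 := fun i => ENNReal.ofReal_le_one.1 (h_accept i ▸ prob_le_one)
  refine (hpairs.measure_forall_lt_notMem (fun i => (hXmeas i).prodMk (hUmeas i))
    (S := fun i => {p | p.2 < f p.1 / (g p.1 * M i)})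
    (fun i => measurableSet_lt measurable_snd (by fun_prop)) k).trans ?_
  rw [ENNReal.ofReal_prod_of_nonneg fun i _ => sub_nonneg.2 (hρ_le i)]
  refine Finset.prod_congr rfl fun i _ => ?_
  rw [preimage_ofPred_eq, h_accept, ENNReal.ofReal_sub _ (hρ_nonneg i), ENNReal.ofReal_one]

/-- **Runtime of rejection sampling with oracle adaptive bounds.**
With i.i.d. proposals `X i ~ Q/Q(ℝⁿ)`, i.i.d. `U i ~ Uniform[0,1]`, all independent, and a
sequence of bounds `M i` with `f x / g x ≤ M i` on the support of `g`, the number `K` of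
proposals until the first acceptance `U i < f (X i) / (g (X i) M i)` satisfies
`P(K > k) = ∏_{i ≤ k} (1 - ρ i)` where `ρ i = P(ℝⁿ)/(Q(ℝⁿ) M i)`. -/
theorem oracle_rejection_sampling_runtime
    {Ω : Type*} [MeasureSpace Ω] [IsProbabilityMeasure (ℙ : Measure Ω)]
    {n : ℕ} (μ P Q : Measure (Fin n → ℝ)) [SigmaFinite μ]
    [IsFiniteMeasure P] [IsFiniteMeasure Q] (hP : P ≠ 0) (hQ : Q ≠ 0)
    (f g : (Fin n → ℝ) → ℝ) (hfmeas : Measurable f) (hgmeas : Measurable g)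
    (hf0 : ∀ x, 0 ≤ f x) (hg0 : ∀ x, 0 ≤ g x)
    (hPd : ∀ B, MeasurableSet B → P B = ∫⁻ x in B, ENNReal.ofReal (f x) ∂μ)
    (hQd : ∀ B, MeasurableSet B → Q B = ∫⁻ x in B, ENNReal.ofReal (g x) ∂μ)
    (hsupp : Function.support f = Function.support g)
    (M : ℕ → ℝ)
    (hbound : ∀ i, ∀ x ∈ Function.support g, f x / g x ≤ M i)
    (X : ℕ → Ω → (Fin n → ℝ)) (U : ℕ → Ω → ℝ)
    (hXmeas : ∀ i, Measurable (X i)) (hUmeas : ∀ i, Measurable (U i))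
    (hX : ∀ i, ∀ B, MeasurableSet B → ℙ {ω | X i ω ∈ B} = Q B / Q Set.univ)
    (hU : ∀ i, ∀ t ∈ Set.Icc (0:ℝ) 1, ℙ {ω | U i ω ≤ t} = ENNReal.ofReal t)
    (hpairs : iIndepFun (fun i ω => (X i ω, U i ω)) ℙ)
    (hXU : ∀ i, IndepFun (X i) (U i) ℙ) :
    ∀ k : ℕ, ℙ {ω | ∀ i < k, ¬ (U i ω < f (X i ω) / (g (X i ω) * M i))} =
      ENNReal.ofReal (∏ i ∈ Finset.range k,
        (1 - (P Set.univ).toReal / ((Q Set.univ).toReal * M i))) :=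
  oracle_rejection_sampling_runtime_general μ P Q hP hQ f g hfmeas hgmeas hf0 hg0 hPd hQd hsupp M
    hbound X U hXmeas hUmeas hX hU hpairs hXU
end

section
/- Let λ_1 > 0 and λ_2 > 0, let E_1, E_2 be independent exponential random variables with rates λ_1, λ_2, and set G_1 = −log E_1 and G_2 = −log(E_1 + E_2). Then G_1 is Gumbel distributed with location log λ_1, G_2 ≤ G_1 almost surely, and for all g ≤ h, P(G_2 ≤ g | G_1 = h) equals the distribution function of a Gumbel random variable with location log λ_2 truncated to (−∞, h], namely exp(−exp(−(g − log λ_2)) + exp(−(h − log λ_2))) for g ≤ h and 1 for g > h. -/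
open MeasureTheory ProbabilityTheory
open scoped ENNReal

/-!
Because `E1 > 0` almost surely, `G2 = -log (exp (-G1) + E2)` with `E2` independent of `G1`.
Hence, given `G1 = h`, `G2` is distributed as `-log (exp (-h) + E2)`, and for `g ≤ h`
`P(-log (exp (-h) + E2) ≤ g) = P(E2 ≥ exp (-g) - exp (-h)) = exp (-lam2 * (exp (-g) - exp (-h)))`,
which is the truncated Gumbel distribution function. The Gumbel law of `G1` is the same
computation for `P(E1 ≥ exp (-g))`.
-/

open Real Set

namespace Real

lemma neg_log_le_iff {x g : ℝ} (hx : 0 < x) : -log x ≤ g ↔ exp (-g) ≤ x := by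
  rw [neg_le, le_log_iff_exp_le hx]

lemma exp_neg_sub_log {lam : ℝ} (hlam : 0 < lam) (x : ℝ) :
    exp (-(x - log lam)) = lam * exp (-x) := by
  rw [show -(x - log lam) = log lam + -x by ring, exp_add, exp_log hlam]

end Real

namespace ProbabilityTheory

lemma expMeasure_Iic {lam : ℝ} (hlam : 0 < lam) (u : ℝ) :
    expMeasure lam (Iic u) = ENNReal.ofReal (if 0 ≤ u then 1 - exp (-(lam * u)) else 0) := by
  have : IsProbabilityMeasure (expMeasure lam) := isProbabilityMeasure_expMeasure hlam
  rw [← ofReal_cdf, cdf_expMeasure_eq hlam]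

lemma expMeasure_Ici {lam : ℝ} (hlam : 0 < lam) (u : ℝ) :
    expMeasure lam (Ici u) = ENNReal.ofReal (exp (-(lam * max u 0))) := by
  have : IsProbabilityMeasure (expMeasure lam) := isProbabilityMeasure_expMeasure hlam
  have hIio : expMeasure lam (Iio u) = expMeasure lam (Iic u) :=
    measure_congr ((withDensity_absolutelyContinuous _ _).ae_eq Iio_ae_eq_Iic)
  rw [← compl_Iio, measure_compl measurableSet_Iio (measure_ne_top _ _), measure_univ, hIio,
    expMeasure_Iic hlam u]
  rcases le_or_gt 0 u with hu | hu
  · rw [if_pos hu, max_eq_left hu, ENNReal.ofReal_sub _ (exp_pos _).le, ENNReal.ofReal_one,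
      ENNReal.sub_sub_cancel ENNReal.one_ne_top
        (ENNReal.ofReal_le_one.2 (exp_le_one_iff.2 (neg_nonpos.2 (by positivity))))]
  · simp [max_eq_right hu.le, hu.not_ge]

section Independence

variable {α β γ Ω : Type*} {mα : MeasurableSpace α} {mβ : MeasurableSpace β}
  {mγ : MeasurableSpace γ} [MeasurableSpace Ω]

lemma Kernel.map_id_prod_const_apply (ν : Measure γ) [SFinite ν] {f : β × γ → Ω}
    (hf : Measurable f) (x : β) :
    (Kernel.id ×ₖ Kernel.const β ν).map f x = ν.map (fun y => f (x, y)) := by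
  rw [Kernel.map_apply _ hf, Kernel.prod_apply, Kernel.id_apply, Kernel.const_apply,
    Measure.dirac_prod, Measure.map_map hf measurable_prodMk_left]
  rfl

lemma condDistrib_ae_eq_of_indepFun [StandardBorelSpace Ω] [Nonempty Ω] {μ : Measure α}
    [IsFiniteMeasure μ] {X : α → β} {Y : α → γ} {f : β × γ → Ω}
    (hX : AEMeasurable X μ) (hY : AEMeasurable Y μ) (hf : Measurable f) (hXY : IndepFun X Y μ) :
    condDistrib (fun a => f (X a, Y a)) X μ =ᵐ[μ.map X]
      (Kernel.id ×ₖ Kernel.const β (μ.map Y)).map f := by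
  refine condDistrib_ae_eq_of_measure_eq_compProd X (hf.comp_aemeasurable (hX.prodMk hY)) ?_
  have hg : Measurable fun p : β × γ => (p.1, f p) := measurable_fst.prodMk hf
  ext s hs
  calc μ.map (fun a => (X a, f (X a, Y a))) s
      = (μ.map fun a => (X a, Y a)) ((fun p => (p.1, f p)) ⁻¹' s) := by
        rw [← Measure.map_apply hg hs,
          AEMeasurable.map_map_of_aemeasurable hg.aemeasurable (hX.prodMk hY)]
        rfl
    _ = ((μ.map X).prod (μ.map Y)) ((fun p => (p.1, f p)) ⁻¹' s) := by
        rw [(indepFun_iff_map_prod_eq_prod_map_map hX hY).1 hXY]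
    _ = (μ.map X ⊗ₘ (Kernel.id ×ₖ Kernel.const β (μ.map Y)).map f) s := by
        rw [Measure.prod_apply (hg hs), Measure.compProd_apply hs]
        refine lintegral_congr fun x => ?_
        rw [Kernel.map_id_prod_const_apply _ hf,
          Measure.map_apply (show Measurable fun y => f (x, y) from hf.comp measurable_prodMk_left)
            (measurable_prodMk_left hs)]
        rfl

end Independence

section ExponentialTail

variable {Ω : Type*} [MeasurableSpace Ω] {μ : Measure Ω} [IsProbabilityMeasure μ]
  {E : Ω → ℝ} {lam : ℝ}

lemma ae_pos_of_exp_tail (hm : Measurable E)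
    (hE : ∀ t : ℝ, 0 ≤ t → μ {ω | t < E ω} = ENNReal.ofReal (exp (-(lam * t)))) :
    ∀ᵐ ω ∂μ, 0 < E ω :=
  (ae_iff_measure_eq (measurableSet_lt measurable_const hm).nullMeasurableSet).2 <| by
    simpa using hE 0 le_rfl

lemma map_eq_expMeasure_of_exp_tail (hm : Measurable E) (hlam : 0 < lam)
    (hE : ∀ t : ℝ, 0 ≤ t → μ {ω | t < E ω} = ENNReal.ofReal (exp (-(lam * t)))) :
    μ.map E = expMeasure lam := by
  have : IsProbabilityMeasure (μ.map E) := Measure.isProbabilityMeasure_map hm.aemeasurable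
  refine Measure.ext_of_Iic _ _ fun c => ?_
  rw [Measure.map_apply hm measurableSet_Iic, expMeasure_Iic hlam c]
  rcases le_or_gt 0 c with hc | hc
  · have hcompl : E ⁻¹' Iic c = {ω | c < E ω}ᶜ := by ext ω; simp
    rw [if_pos hc, hcompl, measure_compl (measurableSet_lt measurable_const hm) (measure_ne_top _ _),
      hE c hc, measure_univ, ENNReal.ofReal_sub _ (exp_pos _).le, ENNReal.ofReal_one]
  · rw [if_neg hc.not_ge, ENNReal.ofReal_zero, measure_eq_zero_iff_ae_notMem]
    filter_upwards [ae_pos_of_exp_tail hm hE] with ω hω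
    simp only [mem_preimage, mem_Iic, not_le]
    linarith

lemma measure_ge_of_exp_tail (hm : Measurable E) (hlam : 0 < lam)
    (hE : ∀ t : ℝ, 0 ≤ t → μ {ω | t < E ω} = ENNReal.ofReal (exp (-(lam * t)))) (t : ℝ) :
    μ {ω | t ≤ E ω} = ENNReal.ofReal (exp (-(lam * max t 0))) := by
  rw [← expMeasure_Ici hlam, ← map_eq_expMeasure_of_exp_tail hm hlam hE,
    Measure.map_apply hm measurableSet_Ici]
  rfl

lemma measure_neg_log_le_of_exp_tail (hm : Measurable E) (hlam : 0 < lam)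
    (hE : ∀ t : ℝ, 0 ≤ t → μ {ω | t < E ω} = ENNReal.ofReal (exp (-(lam * t)))) (g : ℝ) :
    μ {ω | -log (E ω) ≤ g} = ENNReal.ofReal (exp (-exp (-(g - log lam)))) := by
  calc μ {ω | -log (E ω) ≤ g} = μ {ω | exp (-g) ≤ E ω} := by
        refine measure_congr (Filter.eventuallyEq_set.2 ?_)
        filter_upwards [ae_pos_of_exp_tail hm hE] with ω hω
        exact neg_log_le_iff hω
    _ = ENNReal.ofReal (exp (-exp (-(g - log lam)))) := by
        rw [measure_ge_of_exp_tail hm hlam hE, max_eq_left (exp_pos _).le,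
          exp_neg_sub_log hlam]

lemma measure_neg_log_exp_neg_add_le_of_exp_tail (hm : Measurable E) (hlam : 0 < lam)
    (hE : ∀ t : ℝ, 0 ≤ t → μ {ω | t < E ω} = ENNReal.ofReal (exp (-(lam * t)))) (h g : ℝ) :
    μ {ω | -log (exp (-h) + E ω) ≤ g} = ENNReal.ofReal (if g ≤ h then
      exp (-exp (-(g - log lam)) + exp (-(h - log lam))) else 1) := by
  calc μ {ω | -log (exp (-h) + E ω) ≤ g} = μ {ω | exp (-g) - exp (-h) ≤ E ω} := by
        refine measure_congr (Filter.eventuallyEq_set.2 ?_)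
        filter_upwards [ae_pos_of_exp_tail hm hE] with ω hω
        rw [neg_log_le_iff (by positivity), sub_le_iff_le_add']
    _ = ENNReal.ofReal (exp (-(lam * max (exp (-g) - exp (-h)) 0))) :=
        measure_ge_of_exp_tail hm hlam hE _
    _ = _ := by
        split_ifs with hgh
        · rw [max_eq_left (sub_nonneg.2 (exp_le_exp.2 (neg_le_neg hgh))), exp_neg_sub_log hlam,
            exp_neg_sub_log hlam]
          ring_nf
        · rw [max_eq_right (sub_nonpos.2 (exp_le_exp.2 (by linarith))), mul_zero, neg_zero,
            exp_zero]

end ExponentialTail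

end ProbabilityTheory

/-- **Truncated-Gumbel chain rule for partial sums of exponentials.**
Let `E1, E2` be independent exponentials with rates `lam1, lam2 > 0`, and set
`G1 = -log E1`, `G2 = -log (E1 + E2)`.  Then `G1` is Gumbel with location `log lam1`,
`G2 ≤ G1` almost surely, and the conditional distribution of `G2` given `G1 = h` is a
Gumbel with location `log lam2` truncated to `(-∞, h]`, namely `P(G2 ≤ g | G1 = h)` equals
`exp (-exp (-(g - log lam2)) + exp (-(h - log lam2)))` for `g ≤ h` and `1` for `g > h`. -/
theorem neg_log_partial_sums_truncated_gumbel
    {Ω : Type*} [MeasureSpace Ω] [IsProbabilityMeasure (ℙ : Measure Ω)]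
    (E1 E2 : Ω → ℝ) (h1meas : Measurable E1) (h2meas : Measurable E2)
    (lam1 lam2 : ℝ) (hlam1 : 0 < lam1) (hlam2 : 0 < lam2)
    (hindep : IndepFun E1 E2 ℙ)
    (hE1 : ∀ t : ℝ, 0 ≤ t → ℙ {ω | t < E1 ω} = ENNReal.ofReal (Real.exp (-(lam1 * t))))
    (hE2 : ∀ t : ℝ, 0 ≤ t → ℙ {ω | t < E2 ω} = ENNReal.ofReal (Real.exp (-(lam2 * t)))) :
    -- G1 = -log E1 is Gumbel with location log lam1
    (∀ g : ℝ, ℙ {ω | -Real.log (E1 ω) ≤ g} =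
      ENNReal.ofReal (Real.exp (-Real.exp (-(g - Real.log lam1))))) ∧
    -- G2 = -log (E1 + E2) ≤ G1 almost surely
    (∀ᵐ ω ∂(ℙ : Measure Ω), -Real.log (E1 ω + E2 ω) ≤ -Real.log (E1 ω)) ∧
    -- conditionally on G1 = h, G2 is a Gumbel with location log lam2 truncated to (-∞, h]
    (∀ᵐ h ∂(Measure.map (fun ω => -Real.log (E1 ω)) (ℙ : Measure Ω)),
      ∀ g : ℝ,
        condDistrib (fun ω => -Real.log (E1 ω + E2 ω))
            (fun ω => -Real.log (E1 ω)) ℙ h (Set.Iic g) =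
          ENNReal.ofReal (if g ≤ h then
              Real.exp (-Real.exp (-(g - Real.log lam2)) +
                Real.exp (-(h - Real.log lam2)))
            else 1)) := by
  have hE1pos := ae_pos_of_exp_tail h1meas hE1
  have hE2pos := ae_pos_of_exp_tail h2meas hE2
  refine ⟨measure_neg_log_le_of_exp_tail h1meas hlam1 hE1, ?_, ?_⟩
  · filter_upwards [hE1pos, hE2pos] with ω h1 h2
    exact neg_le_neg (log_le_log h1 (le_add_of_nonneg_right h2.le))
  · set G1 : Ω → ℝ := fun ω => -log (E1 ω)
    have hf : Measurable fun p : ℝ × ℝ => -log (exp (-p.1) + p.2) := by fun_prop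
    have hG2 : (fun ω => -log (E1 ω + E2 ω)) =ᵐ[ℙ] fun ω => -log (exp (-G1 ω) + E2 ω) := by
      filter_upwards [hE1pos] with ω hω
      simp only [G1, neg_neg, exp_log hω]
    have hG1E2 : IndepFun G1 E2 ℙ := hindep.comp measurable_log.neg measurable_id
    filter_upwards [condDistrib_ae_eq_of_indepFun h1meas.log.neg.aemeasurable
      h2meas.aemeasurable hf hG1E2] with h hh g
    rw [condDistrib_congr_left hG2, hh, Kernel.map_id_prod_const_apply _ hf,
      Measure.map_apply (by fun_prop) measurableSet_Iic, Measure.map_apply h2meas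
      ((show Measurable fun e => -log (exp (-h) + e) by fun_prop) measurableSet_Iic)]
    exact measure_neg_log_exp_neg_add_le_of_exp_tail h2meas hlam2 hE2 h g
end
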